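/- arXiv:1302.5913 — 5 statements merged into one kernel-verified Lean document; each statement's English description precedes it below -/
import Mathlib

section
/- Let V be a finite set and let (V, I) be a k-system with rank function r and span function span. Then for every subset T ⊆ V, r(span(T)) ≤ k·r(T) ≤ k·|T|. -/
open Finset

/-- The rank of a subset `S` w.r.t. an independence family `I`:
the maximum size of a member of `I` contained in `S`. -/
def sysRank {V : Type*} [DecidableEq V] (I : Finset (Finset V)) (S : Finset V) : ℕ :=
  (S.powerset.filter (· ∈ I)).sup Finset.card

/-- The span of a subset `T` w.r.t. an independence family `I`:
all elements whose addition does not increase the rank. -/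
def sysSpan {V : Type*} [DecidableEq V] [Fintype V] (I : Finset (Finset V)) (T : Finset V) :
    Finset V :=
  univ.filter (fun e => sysRank I (insert e T) = sysRank I T)

/-- `I` is a `k`-system: downward closed, contains `∅`, and every maximal
independent subset of any `S` has size at least `rank(S)/k`. -/
def IsKSystem {V : Type*} [DecidableEq V] (I : Finset (Finset V)) (k : ℕ) : Prop :=
  (∀ A ∈ I, ∀ B ⊆ A, B ∈ I) ∧ (∅ ∈ I) ∧
  (∀ S J : Finset V, J ⊆ S → J ∈ I → (∀ e ∈ S, e ∉ J → insert e J ∉ I) →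
    sysRank I S ≤ k * J.card)

lemma sysRank_le_of_mem {V : Type*} [DecidableEq V] (I : Finset (Finset V))
    {J S : Finset V} (hJS : J ⊆ S) (hJI : J ∈ I) : J.card ≤ sysRank I S :=
  Finset.le_sup (by simp [Finset.mem_filter, Finset.mem_powerset, hJS, hJI])

lemma sysRank_le_card {V : Type*} [DecidableEq V] (I : Finset (Finset V))
    (S : Finset V) : sysRank I S ≤ S.card := by
  apply Finset.sup_le
  intro J hJ
  exact Finset.card_le_card (Finset.mem_powerset.mp (Finset.mem_filter.mp hJ).1)

theorem ksystem_rank_span_le {V : Type*} [DecidableEq V] [Fintype V]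
    (I : Finset (Finset V)) (k : ℕ) (hk : 1 ≤ k) (hsys : IsKSystem I k)
    (T : Finset V) :
    sysRank I (sysSpan I T) ≤ k * sysRank I T ∧ k * sysRank I T ≤ k * T.card := by
  obtain ⟨hdown, hempty, hmax⟩ := hsys
  have hne : (T.powerset.filter (· ∈ I)).Nonempty :=
    ⟨∅, by simp [hempty]⟩
  obtain ⟨J, hJmem, hJeq⟩ := Finset.exists_mem_eq_sup _ hne Finset.card
  rw [Finset.mem_filter, Finset.mem_powerset] at hJmem
  obtain ⟨hJT, hJI⟩ := hJmem
  have hJeq : sysRank I T = J.card := hJeq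
  have hTspan : T ⊆ sysSpan I T := by
    intro e he
    simp only [sysSpan, Finset.mem_filter, Finset.mem_univ, true_and]
    rw [Finset.insert_eq_self.mpr he]
  constructor
  · have hmaximal : ∀ e ∈ sysSpan I T, e ∉ J → insert e J ∉ I := by
      intro e hespan heJ hins
      have he : sysRank I (insert e T) = sysRank I T := by
        simpa [sysSpan] using hespan
      have hle : (insert e J).card ≤ sysRank I (insert e T) :=
        sysRank_le_of_mem I (Finset.insert_subset_insert e hJT) hins
      rw [Finset.card_insert_of_notMem heJ, he, hJeq] at hle
      omega
    have := hmax (sysSpan I T) J (hJT.trans hTspan) hJI hmaximal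
    rwa [hJeq]
  · exact Nat.mul_le_mul_left k (sysRank_le_card I T)
end

section
/- Let V be a finite linearly ordered set, p : V → [0,1], and let Ω = {0,1}^V carry the product probability measure under which each coordinate ω_e equals 1 independently with probability p_e. Let Q : Ω → 2^V be a map such that for every e ∈ V, membership of e in Q(ω) depends only on the coordinates ω_f for f < e (i.e., if ω and ω' agree on all coordinates f < e, then e ∈ Q(ω) iff e ∈ Q(ω')). Then E[ |{e ∈ Q(ω) : ω_e = 1}| ] = E[ Σ_{e ∈ Q(ω)} p_e ]. -/
/-! Whether `e` is probed is decided before `ω e` is revealed, so the indicator of `e ∈ Q ω`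
is independent of `ω e` under the product measure. Hence `e` is probed and active with
probability `p e · P(e ∈ Q ω)`; summing over `e` gives both sides. Independence is made
concrete by splitting `V → Bool` as `Bool × ({f // f ≠ e} → Bool)`, along which
`prodWeight` factors. -/

open Finset

/-- The probability mass of the outcome `ω` in the product of independent
Bernoulli distributions where coordinate `e` equals `true` with probability `p e`. -/
noncomputable def prodWeight {V : Type*} [Fintype V] (p : V → ℝ) (ω : V → Bool) : ℝ :=
  ∏ e, (if ω e then p e else 1 - p e)

open Function

section

variable {V : Type*} [DecidableEq V]

lemma funSplitAt_symm_eq_update (e : V) (b b' : Bool) (η : {f // f ≠ e} → Bool) :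
    (Equiv.funSplitAt e Bool).symm (b, η)
      = update ((Equiv.funSplitAt e Bool).symm (b', η)) e b := by
  ext f
  rcases eq_or_ne f e with rfl | h
  · simp
  · simp [h]

variable [Fintype V]

lemma prodWeight_funSplitAt_symm (p : V → ℝ) (e : V) (b : Bool) (η : {f // f ≠ e} → Bool) :
    prodWeight p ((Equiv.funSplitAt e Bool).symm (b, η))
      = (if b then p e else 1 - p e) * ∏ f, (if η f then p f else 1 - p f) := by
  rw [prodWeight, Fintype.prod_eq_mul_prod_subtype_ne _ e]
  congr 1
  · simp
  · refine Fintype.prod_congr _ _ fun f => ?_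
    simp [f.2]

lemma sum_prodWeight_mul_ite_of_update_eq (p : V → ℝ) (e : V) (g : (V → Bool) → ℝ)
    (hg : ∀ ω b, g (update ω e b) = g ω) :
    ∑ ω, prodWeight p ω * (if ω e then g ω else 0) = p e * ∑ ω, prodWeight p ω * g ω := by
  have hg_split (b : Bool) (η : {f // f ≠ e} → Bool) :
      g ((Equiv.funSplitAt e Bool).symm (b, η)) = g ((Equiv.funSplitAt e Bool).symm (true, η)) := by
    rw [funSplitAt_symm_eq_update e b true, hg]
  simp only [← (Equiv.funSplitAt e Bool).symm.sum_comp, Fintype.sum_prod_type_right,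
    Fintype.sum_bool, prodWeight_funSplitAt_symm, hg_split]
  rw [mul_sum]
  refine Fintype.sum_congr _ _ fun η => ?_
  simp only [↓reduceIte, Equiv.funSplitAt_symm_apply, ↓reduceDIte, Bool.false_eq_true, mul_zero,
    add_zero]
  ring

end

theorem expected_active_probed_general {V : Type*} [Fintype V] [LinearOrder V]
    (p : V → ℝ)
    (Q : (V → Bool) → Finset V)
    (hQ : ∀ (e : V) (ω ω' : V → Bool),
      (∀ f, f < e → ω f = ω' f) → (e ∈ Q ω ↔ e ∈ Q ω')) :
    ∑ ω : V → Bool, prodWeight p ω * (((Q ω).filter (fun e => ω e = true)).card : ℝ)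
      = ∑ ω : V → Bool, prodWeight p ω * ∑ e ∈ Q ω, p e := by
  have probed_update (e : V) (ω : V → Bool) (b : Bool) : e ∈ Q (update ω e b) ↔ e ∈ Q ω :=
    hQ e _ _ fun f hf => update_of_ne hf.ne b ω
  calc ∑ ω : V → Bool, prodWeight p ω * (((Q ω).filter (fun e => ω e = true)).card : ℝ)
      = ∑ e, ∑ ω : V → Bool,
          prodWeight p ω * (if ω e then (if e ∈ Q ω then 1 else 0) else 0) := by
        rw [sum_comm]
        refine Fintype.sum_congr _ _ fun ω => ?_
        rw [natCast_card_filter, ← Fintype.sum_ite_mem (Q ω), mul_sum]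
        refine Fintype.sum_congr _ _ fun e => ?_
        split_ifs <;> rfl
    _ = ∑ e, p e * ∑ ω : V → Bool, prodWeight p ω * (if e ∈ Q ω then 1 else 0) :=
        Fintype.sum_congr _ _ fun e =>
          sum_prodWeight_mul_ite_of_update_eq p e _ fun ω b => by simp only [probed_update]
    _ = ∑ ω : V → Bool, prodWeight p ω * ∑ e ∈ Q ω, p e := by
        simp_rw [mul_sum]
        rw [sum_comm]
        refine Fintype.sum_congr _ _ fun ω => ?_
        rw [← Fintype.sum_ite_mem (Q ω)]
        refine Fintype.sum_congr _ _ fun e => ?_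
        split_ifs <;> ring

/-- For a prefix-measurable probed-set map `Q` (membership of `e` in `Q ω` depends only
on coordinates strictly below `e`), the expected number of probed active elements equals
the expected sum of `p e` over probed elements. -/
theorem expected_active_probed {V : Type*} [Fintype V] [LinearOrder V]
    (p : V → ℝ) (hp0 : ∀ e, 0 ≤ p e) (hp1 : ∀ e, p e ≤ 1)
    (Q : (V → Bool) → Finset V)
    (hQ : ∀ (e : V) (ω ω' : V → Bool),
      (∀ f, f < e → ω f = ω' f) → (e ∈ Q ω ↔ e ∈ Q ω')) :
    ∑ ω : V → Bool, prodWeight p ω * (((Q ω).filter (fun e => ω e = true)).card : ℝ)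
      = ∑ ω : V → Bool, prodWeight p ω * ∑ e ∈ Q ω, p e :=
  expected_active_probed_general p Q hQ
end

section
/- Let n and B be natural numbers. For each i ∈ {1,…,n}, let μ_i : {0, 1, …, B} → ℝ_{≥0} with Σ_{c=0}^{B} μ_i(c) = 1, and define F_i(c) = Σ_{h=c}^{B} μ_i(h). Let P ⊆ ℝ^n be an arbitrary set. Suppose z_{i,c} ∈ ℝ satisfy 0 ≤ z_{i,0} ≤ z_{i,1} ≤ … ≤ z_{i,B} ≤ 1 for each i, set x_i = Σ_{c=0}^{B} μ_i(c)·z_{i,c}, and assume (x_1, …, x_n) ∈ P. Define y_{i,c} = z_{i,c} − z_{i,c−1} (with z_{i,−1} = 0) and x_{i,c} = F_i(c)·y_{i,c}. Then: (a) y_{i,c} ≥ 0 for all i, c; (b) Σ_{c=0}^{B} y_{i,c} ≤ 1 for every i; (c) Σ_{c=0}^{B} x_{i,c} = x_i for every i, hence the vector (Σ_c x_{i,c})_{i} lies in P; and (d) Σ_{i=1}^{n} Σ_{c=0}^{B} c·x_{i,c} = Σ_{i=1}^{n} Σ_{c=0}^{B} μ_i(c)·( c·z_{i,c} − Σ_{h=0}^{c−1}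 z_{i,h} ). -/
open Finset

lemma tel1 (z y : ℕ → ℝ) (hy : ∀ c, y c = z c - (if c = 0 then 0 else z (c - 1)))
    (h : ℕ) : ∑ c ∈ Finset.range (h + 1), y c = z h := by
  induction h with
  | zero => simp [hy]
  | succ k ih =>
      rw [Finset.sum_range_succ, ih, hy]
      simp

lemma tel2 (z y : ℕ → ℝ) (hy : ∀ c, y c = z c - (if c = 0 then 0 else z (c - 1)))
    (h : ℕ) : ∑ c ∈ Finset.range (h + 1), (c : ℝ) * y c
      = (h : ℝ) * z h - ∑ c ∈ Finset.range h, z c := by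
  induction h with
  | zero => simp [hy]
  | succ k ih =>
      rw [Finset.sum_range_succ, ih, hy, Finset.sum_range_succ]
      simp only [Nat.succ_ne_zero, if_false, Nat.add_sub_cancel]
      push_cast
      ring

lemma swap_sum (f : ℕ → ℕ → ℝ) (B : ℕ) :
    ∑ c ∈ Finset.range (B + 1), ∑ h ∈ Finset.Icc c B, f c h
      = ∑ h ∈ Finset.range (B + 1), ∑ c ∈ Finset.range (h + 1), f c h := by
  refine Finset.sum_comm' ?_
  intro c h
  simp only [Finset.mem_range, Finset.mem_Icc]
  omega

/-- From a feasible solution `(z, x)` of the LP relaxation of the optimal truthful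
mechanism one obtains a feasible solution `(y, xx)` of the stochastic probing LP for
sequential posted-price mechanisms with the same objective value. -/
theorem lpM_to_lpP (n B : ℕ)
    (μ : Fin n → ℕ → ℝ)
    (hμ0 : ∀ i, ∀ c ≤ B, 0 ≤ μ i c)
    (hμ1 : ∀ i, ∑ c ∈ Finset.range (B + 1), μ i c = 1)
    (F : Fin n → ℕ → ℝ)
    (hF : ∀ i c, F i c = ∑ h ∈ Finset.Icc c B, μ i h)
    (P : Set (Fin n → ℝ))
    (z : Fin n → ℕ → ℝ)
    (hz0 : ∀ i, 0 ≤ z i 0)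
    (hzmono : ∀ i, ∀ c < B, z i c ≤ z i (c + 1))
    (hz1 : ∀ i, z i B ≤ 1)
    (x : Fin n → ℝ)
    (hx : ∀ i, x i = ∑ c ∈ Finset.range (B + 1), μ i c * z i c)
    (hxP : x ∈ P)
    (y : Fin n → ℕ → ℝ)
    (hy : ∀ i c, y i c = z i c - (if c = 0 then 0 else z i (c - 1)))
    (xx : Fin n → ℕ → ℝ)
    (hxx : ∀ i c, xx i c = F i c * y i c) :
    (∀ i, ∀ c ≤ B, 0 ≤ y i c) ∧
    (∀ i, ∑ c ∈ Finset.range (B + 1), y i c ≤ 1) ∧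
    (∀ i, ∑ c ∈ Finset.range (B + 1), xx i c = x i) ∧
    ((fun i => ∑ c ∈ Finset.range (B + 1), xx i c) ∈ P) ∧
    (∑ i : Fin n, ∑ c ∈ Finset.range (B + 1), (c : ℝ) * xx i c
      = ∑ i : Fin n, ∑ c ∈ Finset.range (B + 1),
          μ i c * ((c : ℝ) * z i c - ∑ h ∈ Finset.range c, z i h)) := by
  have hsum : ∀ i, ∑ c ∈ Finset.range (B + 1), xx i c = x i := by
    intro i
    have : ∑ c ∈ Finset.range (B + 1), xx i c
        = ∑ c ∈ Finset.range (B + 1), ∑ h ∈ Finset.Icc c B, μ i h * y i c := by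
      refine Finset.sum_congr rfl fun c _ => ?_
      rw [hxx, hF, Finset.sum_mul]
    rw [this, swap_sum, hx i]
    refine Finset.sum_congr rfl fun h _ => ?_
    rw [← Finset.mul_sum, tel1 (z i) (y i) (hy i) h]
  refine ⟨?_, ?_, hsum, ?_, ?_⟩
  · intro i c hc
    rw [hy]
    cases c with
    | zero => simpa using hz0 i
    | succ k =>
        simp only [Nat.succ_ne_zero, if_false, Nat.add_sub_cancel, sub_nonneg]
        exact hzmono i k (by omega)
  · intro i
    rw [tel1 (z i) (y i) (hy i) B]
    exact hz1 i
  · have : (fun i => ∑ c ∈ Finset.range (B + 1), xx i c) = x := funext hsum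
    rw [this]; exact hxP
  · refine Finset.sum_congr rfl fun i _ => ?_
    have : ∑ c ∈ Finset.range (B + 1), (c : ℝ) * xx i c
        = ∑ c ∈ Finset.range (B + 1), ∑ h ∈ Finset.Icc c B, μ i h * ((c : ℝ) * y i c) := by
      refine Finset.sum_congr rfl fun c _ => ?_
      rw [hxx, hF, Finset.sum_mul, Finset.mul_sum]
      exact Finset.sum_congr rfl fun h _ => by ring
    rw [this, swap_sum (fun c h => μ i h * ((c : ℝ) * y i c)) B]
    refine Finset.sum_congr rfl fun h _ => ?_
    rw [← Finset.mul_sum, tel2 (z i) (y i) (hy i) h]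
end

section
/- Let B and C be disjoint finite sets, p : B ∪ C → ℝ, and d : B → ℕ. Suppose that for every e ∈ B: (1) |{f ∈ C : p_f ≥ p_e}| ≥ d_e, and (2) |{f ∈ B : d_f ≤ d_e}| ≤ d_e. Then there exists an injection φ : B → C such that p_{φ(e)} ≥ p_e for every e ∈ B. -/
open Finset

/-- Hall-type matching lemma for probing with deadlines: if every `e ∈ B` has at least
`d e` elements of `C` with probability at least `p e`, and at most `d e` elements of `B`
have deadline at most `d e`, then there is an injection `φ` from `B` into `C` with
`p (φ e) ≥ p e` for all `e ∈ B`. -/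
theorem deadline_matching_exists {V : Type*} [DecidableEq V]
    (B C : Finset V) (hdisj : Disjoint B C)
    (p : V → ℝ) (d : V → ℕ)
    (h1 : ∀ e ∈ B, d e ≤ (C.filter (fun f => p e ≤ p f)).card)
    (h2 : ∀ e ∈ B, (B.filter (fun f => d f ≤ d e)).card ≤ d e) :
    ∃ φ : V → V, Set.InjOn φ ↑B ∧ ∀ e ∈ B, φ e ∈ C ∧ p e ≤ p (φ e) := by
  classical
  set t : {x // x ∈ B} → Finset V := fun e => C.filter (fun f => p e.1 ≤ p f) with ht
  have hall : ∀ S : Finset {x // x ∈ B}, S.card ≤ (S.biUnion t).card := by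
    intro S
    rcases S.eq_empty_or_nonempty with rfl | hS
    · simp
    · obtain ⟨e, heS, hemax⟩ := S.exists_max_image (fun e => d e.1) hS
      have hcard1 : S.card ≤ (B.filter (fun f => d f ≤ d e.1)).card := by
        have : S.image Subtype.val ⊆ B.filter (fun f => d f ≤ d e.1) := by
          intro v hv
          simp only [mem_image] at hv
          obtain ⟨a, ha, rfl⟩ := hv
          exact mem_filter.2 ⟨a.2, hemax a ha⟩
        calc S.card = (S.image Subtype.val).card :=
              (card_image_of_injective _ Subtype.val_injective).symm
          _ ≤ _ := card_le_card this
      have hcard2 : (t e).card ≤ (S.biUnion t).card :=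
        card_le_card (subset_biUnion_of_mem t heS)
      calc S.card ≤ d e.1 := hcard1.trans (h2 e.1 e.2)
        _ ≤ (t e).card := h1 e.1 e.2
        _ ≤ _ := hcard2
  obtain ⟨f, hfinj, hf⟩ :=
    (Finset.all_card_le_biUnion_card_iff_existsInjective' t).1 hall
  refine ⟨fun v => if h : v ∈ B then f ⟨v, h⟩ else v, ?_, ?_⟩
  · intro x hx y hy hxy
    simp only [dif_pos (mem_coe.1 hx), dif_pos (mem_coe.1 hy)] at hxy
    exact Subtype.ext_iff.1 (hfinj hxy)
  · intro e he
    have := hf ⟨e, he⟩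
    rw [ht, mem_filter] at this
    simpa only [dif_pos he] using this
end

section
/- Let B and C be disjoint finite sets, p : B ∪ C → ℝ_{≥0}, and d : B → ℕ. Suppose that for every e ∈ B: (1) |{f ∈ C : p_f ≥ p_e}| ≥ d_e, and (2) |{f ∈ B : d_f ≤ d_e}| ≤ d_e. Then Σ_{e ∈ B} p_e ≤ Σ_{f ∈ C} p_f, and consequently Σ_{e ∈ B ∪ C} p_e ≤ 2·Σ_{f ∈ C} p_f. -/
/-!
Every `e ∈ B` can be matched to its own `f ∈ C` with `p e ≤ p f`; summing along this matching
gives `Σ_B p ≤ Σ_C p`. Hall's condition for the candidate sets `{f ∈ C | p e ≤ p f}` holds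
because in any family `s ⊆ B` the member `e` with the latest deadline satisfies
`#s ≤ #{f ∈ B | d f ≤ d e} ≤ d e ≤ #{f ∈ C | p e ≤ p f}`.
-/

open Finset Function

namespace Finset

theorem sum_le_sum_of_injective_le {α M : Type*} [AddCommMonoid M] [PartialOrder M]
    [IsOrderedAddMonoid M] {B C : Finset α} {p : α → M} (g : B → α) (hg : Injective g)
    (hgC : ∀ e, g e ∈ C) (hle : ∀ e : B, p e ≤ p (g e)) (hp : ∀ x ∈ C, 0 ≤ p x) :
    ∑ e ∈ B, p e ≤ ∑ x ∈ C, p x := by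
  have hsub : B.attach.map ⟨g, hg⟩ ⊆ C := by
    intro x hx
    obtain ⟨e, -, rfl⟩ := mem_map.1 hx
    exact hgC e
  calc ∑ e ∈ B, p e = ∑ e ∈ B.attach, p e := (sum_attach B p).symm
    _ ≤ ∑ e ∈ B.attach, p (g e) := sum_le_sum fun e _ => hle e
    _ = ∑ x ∈ B.attach.map ⟨g, hg⟩, p x := by rw [sum_map]; rfl
    _ ≤ ∑ x ∈ C, p x := sum_le_sum_of_subset_of_nonneg hsub fun x hx _ => hp x hx

theorem exists_injective_mem_of_deadlines {ι α : Type*} [DecidableEq α] (B : Finset ι)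
    (t : ι → Finset α) (d : ι → ℕ) (ht : ∀ e ∈ B, d e ≤ #(t e))
    (hd : ∀ e ∈ B, #{f ∈ B | d f ≤ d e} ≤ d e) :
    ∃ g : B → α, Injective g ∧ ∀ e : B, g e ∈ t e := by
  refine (all_card_le_biUnion_card_iff_exists_injective fun e : B => t e).1 fun s => ?_
  rcases s.eq_empty_or_nonempty with rfl | hs
  · simp
  obtain ⟨e, he, hmax⟩ := s.exists_max_image (fun e => d e) hs
  have hs_le : #s ≤ #{f ∈ B | d f ≤ d e} :=
    card_le_card_of_injOn Subtype.val (fun x hx => mem_filter.2 ⟨x.2, hmax x hx⟩)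
      Subtype.val_injective.injOn
  calc #s ≤ d e := hs_le.trans (hd e e.2)
    _ ≤ #(t e) := ht e e.2
    _ ≤ #(s.biUnion fun e : B => t e) := card_le_card (subset_biUnion_of_mem (fun e : B => t e) he)

end Finset

/-- Factor-2 loss for probing with deadlines: if every `e ∈ B` has at least `d e`
elements of `C` with probability at least `p e`, and at most `d e` elements of `B` have
deadline at most `d e`, then `Σ_{e ∈ B} p e ≤ Σ_{f ∈ C} p f`, and consequently
`Σ_{e ∈ B ∪ C} p e ≤ 2·Σ_{f ∈ C} p f`. -/
theorem deadline_factor_two {V : Type*} [DecidableEq V]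
    (B C : Finset V) (hdisj : Disjoint B C)
    (p : V → ℝ) (hp0 : ∀ e ∈ B ∪ C, 0 ≤ p e) (d : V → ℕ)
    (h1 : ∀ e ∈ B, d e ≤ (C.filter (fun f => p e ≤ p f)).card)
    (h2 : ∀ e ∈ B, (B.filter (fun f => d f ≤ d e)).card ≤ d e) :
    (∑ e ∈ B, p e ≤ ∑ f ∈ C, p f) ∧ (∑ e ∈ B ∪ C, p e ≤ 2 * ∑ f ∈ C, p f) := by
  obtain ⟨g, hg, hgt⟩ :=
    exists_injective_mem_of_deadlines B (fun e => C.filter (fun f => p e ≤ p f)) d h1 h2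
  have hB_le_C : ∑ e ∈ B, p e ≤ ∑ f ∈ C, p f :=
    sum_le_sum_of_injective_le g hg (fun e => (mem_filter.1 (hgt e)).1)
      (fun e => (mem_filter.1 (hgt e)).2) fun x hx => hp0 x (mem_union_right B hx)
  refine ⟨hB_le_C, ?_⟩
  rw [sum_union hdisj]
  linarith
end
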